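/- arXiv:2210.17513 — 2 statements merged into one kernel-verified Lean document; each statement's English description precedes it below -/
import Mathlib

section
/- Every peripheral eigenvalue of a quantum channel is semisimple: if |λ| = 1 and λ ∈ spec(Φ), then ker(Φ − λ·1)² = ker(Φ − λ·1), i.e. the eigennilpotent associated to λ vanishes. -/
open Matrix
open scoped ComplexOrder

/-- The algebra of `d × d` complex matrices. -/
abbrev Mat (d : ℕ) := Matrix (Fin d) (Fin d) ℂ

/-- A linear map on matrices is positive if it maps positive semidefinite matrices to
positive semidefinite matrices. -/
def IsPositiveMap {d : ℕ} (Φ : Module.End ℂ (Mat d)) : Prop :=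
  ∀ X : Mat d, X.PosSemidef → (Φ X).PosSemidef

/-- A linear map on matrices is trace-preserving. -/
def IsTracePreserving {d : ℕ} (Φ : Module.End ℂ (Mat d)) : Prop :=
  ∀ X : Mat d, (Φ X).trace = X.trace

/-- The block-wise application `(Φ ⊗ id_n)(X)` of `Φ` to a matrix on `ℂ^d ⊗ ℂ^n`. -/
def blockApply {d : ℕ} (Φ : Module.End ℂ (Mat d)) (n : ℕ)
    (X : Matrix (Fin d × Fin n) (Fin d × Fin n) ℂ) :
    Matrix (Fin d × Fin n) (Fin d × Fin n) ℂ :=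
  Matrix.of fun p q => Φ (Matrix.of fun i j => X (i, p.2) (j, q.2)) p.1 q.1

/-- Complete positivity: `Φ ⊗ id_n` is positive for every `n`. -/
def IsCompletelyPositive {d : ℕ} (Φ : Module.End ℂ (Mat d)) : Prop :=
  ∀ (n : ℕ) (X : Matrix (Fin d × Fin n) (Fin d × Fin n) ℂ),
    X.PosSemidef → (blockApply Φ n X).PosSemidef

/-- The attractor (peripheral) subspace: the span of eigenvectors corresponding to
eigenvalues of modulus one. -/
noncomputable def attrSubspace {d : ℕ} (Φ : Module.End ℂ (Mat d)) : Submodule ℂ (Mat d) :=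
  ⨆ (μ : ℂ) (_ : ‖μ‖ = 1), Module.End.eigenspace Φ μ

/-! A channel maps positive semidefinite matrices to positive semidefinite matrices of the same
trace, and the entries of such a matrix are bounded by its trace; since positive semidefinite
matrices span all matrices, every orbit `n ↦ Φⁿ X` is bounded. If `(Φ - μ)² X = 0` and
`Y = (Φ - μ) X`, then `Φⁿ⁺¹ X = μⁿ⁺¹ X + (n + 1) μⁿ Y`, which for `|μ| = 1` is bounded only if
`Y = 0`. -/

namespace Matrix.PosSemidef

variable {n : Type*} {A : Matrix n n ℂ}

theorem norm_apply_sq_le (hA : A.PosSemidef) (i j : n) :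
    ‖A i j‖ ^ 2 ≤ (A i i).re * (A j j).re := by
  classical
  have hdet := (hA.submatrix ![i, j]).det_nonneg
  have hji : A j i = starRingEnd ℂ (A i j) := (hA.isHermitian.apply j i).symm
  have hii := (Complex.nonneg_iff.mp (hA.diag_nonneg (i := i))).2
  have hjj := (Complex.nonneg_iff.mp (hA.diag_nonneg (i := j))).2
  rw [det_fin_two, Complex.nonneg_iff] at hdet
  simp only [submatrix_apply, Matrix.cons_val_zero, Matrix.cons_val_one, hji, Complex.mul_conj,
    Complex.normSq_eq_norm_sq] at hdet
  simpa [Complex.mul_re, ← hii, ← hjj, ← Complex.ofReal_pow] using hdet.1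

variable [Fintype n]

theorem apply_le_trace (hA : A.PosSemidef) (i : n) : A i i ≤ A.trace :=
  Finset.single_le_sum (f := fun k => A k k) (fun _ _ => hA.diag_nonneg) (Finset.mem_univ i)

theorem norm_apply_le_re_trace (hA : A.PosSemidef) (i j : n) : ‖A i j‖ ≤ A.trace.re := by
  have hdiag (k : n) : (A k k).re ≤ A.trace.re := (Complex.le_def.mp (hA.apply_le_trace k)).1
  have hdiag_nonneg (k : n) : 0 ≤ (A k k).re := (Complex.le_def.mp hA.diag_nonneg).1
  have htrace : 0 ≤ A.trace.re := (hdiag_nonneg i).trans (hdiag i)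
  refine (pow_le_pow_iff_left₀ (norm_nonneg _) htrace two_ne_zero).mp ?_
  calc ‖A i j‖ ^ 2 ≤ (A i i).re * (A j j).re := hA.norm_apply_sq_le i j
    _ ≤ A.trace.re * A.trace.re := mul_le_mul (hdiag i) (hdiag j) (hdiag_nonneg j) htrace
    _ = A.trace.re ^ 2 := (sq _).symm

end Matrix.PosSemidef

theorem Module.End.pow_succ_apply_of_apply_eq_smul_add {R M : Type*} [CommSemiring R]
    [AddCommMonoid M] [Module R M] {f : Module.End R M} {μ : R} {x y : M}
    (hx : f x = μ • x + y) (hy : f y = μ • y) (n : ℕ) :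
    (f ^ (n + 1)) x = μ ^ (n + 1) • x + ((n + 1) * μ ^ n) • y := by
  induction n with
  | zero => simpa using hx
  | succ n ih =>
    rw [pow_succ', Module.End.mul_apply, ih, map_add, map_smul, map_smul, hx, hy]
    push_cast
    module

theorem eq_zero_of_norm_pow_smul_add_le {𝕜 E : Type*} [RCLike 𝕜] [NormedAddCommGroup E]
    [NormedSpace 𝕜 E] {μ : 𝕜} (hμ : ‖μ‖ = 1) {x y : E} {C : ℝ}
    (h : ∀ n : ℕ, ‖μ ^ (n + 1) • x + ((n + 1) * μ ^ n) • y‖ ≤ C) : y = 0 := by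
  have hgrowth (n : ℕ) : (n + 1) * ‖y‖ ≤ C + ‖x‖ := by
    have hy : ‖((n + 1) * μ ^ n) • y‖ = (n + 1) * ‖y‖ := by
      rw [norm_smul, norm_mul, norm_pow, hμ, one_pow, mul_one]
      norm_cast
    have hx : ‖μ ^ (n + 1) • x‖ = ‖x‖ := by rw [norm_smul, norm_pow, hμ, one_pow, one_mul]
    calc (n + 1) * ‖y‖ = ‖((n + 1) * μ ^ n) • y‖ := hy.symm
      _ ≤ ‖((n + 1) * μ ^ n) • y + μ ^ (n + 1) • x‖ + ‖μ ^ (n + 1) • x‖ :=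
        norm_le_add_norm_add _ _
      _ ≤ C + ‖x‖ := by rw [add_comm (_ • y), hx]; linarith [h n]
  by_contra hy0
  obtain ⟨n, hn⟩ := exists_nat_gt ((C + ‖x‖) / ‖y‖)
  rw [div_lt_iff₀ (norm_pos_iff.mpr hy0)] at hn
  linarith [hgrowth n, norm_nonneg y]

theorem exists_forall_norm_apply_le_of_span_eq_top {𝕜 ι M E : Type*} [NormedField 𝕜]
    [AddCommGroup M] [Module 𝕜 M] [SeminormedAddCommGroup E] [NormedSpace 𝕜 E]
    (F : ι → M →ₗ[𝕜] E) {s : Set M}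
    (hs : Submodule.span 𝕜 s = ⊤) (h : ∀ x ∈ s, ∃ C, ∀ i, ‖F i x‖ ≤ C) (x : M) :
    ∃ C, ∀ i, ‖F i x‖ ≤ C := by
  induction hs ▸ Submodule.mem_top (x := x) using Submodule.span_induction with
  | mem x hx => exact h x hx
  | zero => exact ⟨0, by simp⟩
  | add x y _ _ hx hy =>
    obtain ⟨Cx, hCx⟩ := hx
    obtain ⟨Cy, hCy⟩ := hy
    exact ⟨Cx + Cy, fun i =>
      (map_add (F i) x y ▸ norm_add_le _ _).trans (add_le_add (hCx i) (hCy i))⟩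
  | smul c x _ hx =>
    obtain ⟨C, hC⟩ := hx
    exact ⟨‖c‖ * C, fun i => by
      rw [map_smul, norm_smul]; exact mul_le_mul_of_nonneg_left (hC i) (norm_nonneg c)⟩

-- Matrices carry no global norm; any norm works here, and the entrywise sup norm is the one
-- controlled by the trace.
attribute [local instance] Matrix.normedAddCommGroup Matrix.normedSpace

section Channel

variable {d : ℕ} {Φ : Module.End ℂ (Mat d)}

theorem IsCompletelyPositive.isPositiveMap (hΦ : IsCompletelyPositive Φ) : IsPositiveMap Φ :=
  fun X hX => (hΦ 1 (X.submatrix Prod.fst Prod.fst) (hX.submatrix _)).submatrix fun i => (i, 0)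

theorem IsPositiveMap.pow (hΦ : IsPositiveMap Φ) (n : ℕ) : IsPositiveMap (Φ ^ n) := by
  induction n with
  | zero => exact fun X hX => hX
  | succ n ih => exact fun X hX => ih _ (hΦ X hX)

theorem IsTracePreserving.pow (hΦ : IsTracePreserving Φ) (n : ℕ) : IsTracePreserving (Φ ^ n) := by
  induction n with
  | zero => exact fun X => rfl
  | succ n ih => exact fun X => (ih _).trans (hΦ X)

theorem norm_pow_apply_le_re_trace (hP : IsPositiveMap Φ) (hT : IsTracePreserving Φ) {X : Mat d}
    (hX : X.PosSemidef) (n : ℕ) : ‖(Φ ^ n) X‖ ≤ X.trace.re := by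
  have hXn := hP.pow n X hX
  rw [← hT.pow n X]
  exact (norm_le_iff (Complex.le_def.mp hXn.trace_nonneg).1).mpr hXn.norm_apply_le_re_trace

open scoped MatrixOrder in
theorem exists_forall_norm_pow_apply_le (hP : IsPositiveMap Φ) (hT : IsTracePreserving Φ)
    (X : Mat d) : ∃ C, ∀ n, ‖(Φ ^ n) X‖ ≤ C :=
  exists_forall_norm_apply_le_of_span_eq_top (Φ ^ ·) CStarAlgebra.span_nonneg
    (fun _ hP' => ⟨_, norm_pow_apply_le_re_trace hP hT (nonneg_iff_posSemidef.mp hP')⟩) X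

end Channel

theorem peripheral_eigenvalue_semisimple_general
    (d : ℕ) (Φ : Module.End ℂ (Mat d))
    (hCP : IsCompletelyPositive Φ) (hTP : IsTracePreserving Φ)
    (μ : ℂ) (habs : ‖μ‖ = 1) :
    LinearMap.ker ((Φ - μ • (1 : Module.End ℂ (Mat d))) ∘ₗ
        (Φ - μ • (1 : Module.End ℂ (Mat d)))) =
      LinearMap.ker (Φ - μ • (1 : Module.End ℂ (Mat d))) := by
  refine le_antisymm (fun X hX => ?_) (LinearMap.ker_le_ker_comp _ _)
  set Y := (Φ - μ • 1) X
  have hY : Φ Y = μ • Y := sub_eq_zero.mp hX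
  have hXY : Φ X = μ • X + Y := by simp [Y]
  obtain ⟨C, hC⟩ := exists_forall_norm_pow_apply_le hCP.isPositiveMap hTP X
  exact eq_zero_of_norm_pow_smul_add_le habs fun n =>
    Module.End.pow_succ_apply_of_apply_eq_smul_add hXY hY n ▸ hC (n + 1)

/-- Every peripheral eigenvalue of a quantum channel is semisimple:
if `|μ| = 1` and `μ ∈ spec(Φ)` then `ker (Φ - μ·1)² = ker (Φ - μ·1)`. -/
theorem peripheral_eigenvalue_semisimple
    (d : ℕ) (Φ : Module.End ℂ (Mat d))
    (hCP : IsCompletelyPositive Φ) (hTP : IsTracePreserving Φ)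
    (μ : ℂ) (habs : ‖μ‖ = 1) (hspec : μ ∈ spectrum ℂ Φ) :
    LinearMap.ker ((Φ - μ • (1 : Module.End ℂ (Mat d))) ∘ₗ
        (Φ - μ • (1 : Module.End ℂ (Mat d)))) =
      LinearMap.ker (Φ - μ • (1 : Module.End ℂ (Mat d))) :=
  peripheral_eigenvalue_semisimple_general d Φ hCP hTP μ habs
end

section
/- Let Φ be a faithful quantum channel with full-rank fixed state σ, and let |λ| = 1. Then X is an eigenvector of Φ with eigenvalue λ if and only if σ^{-1/2} X σ^{-1/2} is an eigenvector of the Hilbert–Schmidt adjoint Φ† with eigenvalue λ̄. -/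
/-!
Weight the Hilbert–Schmidt inner product by `σ⁻¹`: `⟪x, y⟫ = tr (y σ⁻¹ xᴴ)`. Applying `Φ ⊗ id₂`
to the positive block matrix `[[Z σ⁻¹ Zᴴ, Z], [Zᴴ, σ]]` and taking the Schur complement of
`Φ σ = σ` gives `Φ Z σ⁻¹ (Φ Z)ᴴ ≤ Φ (Z σ⁻¹ Zᴴ)`, so by trace preservation `Φ` is a contraction
for this inner product. The adjoint of `Φ` for it is `Y ↦ Ψ (Y σ⁻¹) σ`, and a contraction and its
adjoint share their eigenvectors for eigenvalues of modulus one (with conjugate eigenvalues).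
Hence `Φ X = μ X` iff `X σ⁻¹` is a `conj μ`-eigenvector of `Ψ`, and, after conjugate
transposition, iff `σ⁻¹ X` is one. So the `conj μ`-eigenspace of `Ψ` is stable under
`Y ↦ σ Y σ⁻¹` and its inverse. That map is diagonalizable with positive eigenvalues, so its
square root `Y ↦ σ^{1/2} Y σ^{-1/2}` is a polynomial in it and preserves the eigenspace too;
it carries `σ⁻¹ X` to `σ^{-1/2} X σ^{-1/2}`.
-/

open Matrix
open scoped ComplexOrder

open scoped InnerProductSpace ComplexConjugate

section Contraction

variable {E : Type*} [NormedAddCommGroup E] [InnerProductSpace ℂ E] {T T' : E → E}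

theorem norm_apply_le_of_inner_adjoint (hadj : ∀ x y, ⟪T' x, y⟫_ℂ = ⟪x, T y⟫_ℂ)
    (hT : ∀ x, ‖T x‖ ≤ ‖x‖) (x : E) : ‖T' x‖ ≤ ‖x‖ := by
  have h : ‖T' x‖ ^ 2 ≤ ‖x‖ * ‖T' x‖ :=
    calc ‖T' x‖ ^ 2 = RCLike.re ⟪x, T (T' x)⟫_ℂ := by rw [← hadj, inner_self_eq_norm_sq]
      _ ≤ ‖x‖ * ‖T (T' x)‖ := re_inner_le_norm _ _
      _ ≤ ‖x‖ * ‖T' x‖ := by gcongr; exact hT _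
  nlinarith [norm_nonneg x, norm_nonneg (T' x)]

theorem apply_eq_smul_of_inner_adjoint_apply_eq_smul (hadj : ∀ x y, ⟪T' x, y⟫_ℂ = ⟪x, T y⟫_ℂ)
    (hT : ∀ x, ‖T x‖ ≤ ‖x‖) {μ : ℂ} (hμ : ‖μ‖ = 1) {x : E} (hx : T' x = conj μ • x) :
    T x = μ • x := by
  have hinner : ⟪T x, μ • x⟫_ℂ = (‖x‖ ^ 2 : ℝ) := by
    rw [inner_smul_right, ← inner_conj_symm, ← hadj, hx, inner_smul_left, map_mul,
      Complex.conj_conj, inner_self_eq_norm_sq_to_K, ← mul_assoc, Complex.mul_conj', hμ]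
    simp
  have hsq : ‖T x - μ • x‖ ^ 2 ≤ 0 := by
    rw [norm_sub_sq (𝕜 := ℂ), hinner, norm_smul, hμ, one_mul, RCLike.re_to_complex,
      Complex.ofReal_re]
    nlinarith [hT x, norm_nonneg (T x)]
  exact sub_eq_zero.mp (norm_eq_zero.mp (by nlinarith [norm_nonneg (T x - μ • x)]))

theorem apply_eq_smul_iff_inner_adjoint_apply_eq_smul (hadj : ∀ x y, ⟪T' x, y⟫_ℂ = ⟪x, T y⟫_ℂ)
    (hT : ∀ x, ‖T x‖ ≤ ‖x‖) {μ : ℂ} (hμ : ‖μ‖ = 1) {x : E} :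
    T x = μ • x ↔ T' x = conj μ • x := by
  refine ⟨fun hx => apply_eq_smul_of_inner_adjoint_apply_eq_smul (T := T') (T' := T) ?_
    (norm_apply_le_of_inner_adjoint hadj hT) (by simpa) (by simpa),
    apply_eq_smul_of_inner_adjoint_apply_eq_smul hadj hT hμ⟩
  intro x y
  rw [← inner_conj_symm, ← hadj, inner_conj_symm]

end Contraction

section CompletelyPositive

variable {d : ℕ} {Φ : Module.End ℂ (Mat d)}

def finProdFinTwoEquivSum (d : ℕ) : Fin d × Fin 2 ≃ Fin d ⊕ Fin d :=
  (Equiv.prodComm _ _).trans ((finTwoEquiv.prodCongr (Equiv.refl _)).trans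
    (Equiv.boolProdEquivSum _))

theorem blockApply_two_submatrix_fromBlocks (Φ : Module.End ℂ (Mat d)) (A B C D : Mat d) :
    blockApply Φ 2 ((fromBlocks A B C D).submatrix (finProdFinTwoEquivSum d)
      (finProdFinTwoEquivSum d)) =
    (fromBlocks (Φ A) (Φ B) (Φ C) (Φ D)).submatrix (finProdFinTwoEquivSum d)
      (finProdFinTwoEquivSum d) := by
  ext ⟨i, k⟩ ⟨j, l⟩
  fin_cases k <;> fin_cases l <;> rfl

theorem IsCompletelyPositive.posSemidef_fromBlocks (hΦ : IsCompletelyPositive Φ)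
    {A B C D : Mat d} (h : (fromBlocks A B C D).PosSemidef) :
    (fromBlocks (Φ A) (Φ B) (Φ C) (Φ D)).PosSemidef := by
  have := hΦ 2 _ ((posSemidef_submatrix_equiv (finProdFinTwoEquivSum d)).mpr h)
  rwa [blockApply_two_submatrix_fromBlocks, posSemidef_submatrix_equiv] at this

theorem Matrix.PosDef.posSemidef_fromBlocks_mul_inv_mul_conjTranspose {n : Type*} [Fintype n]
    [DecidableEq n] {σ : Matrix n n ℂ} (hσ : σ.PosDef) (Z : Matrix n n ℂ) :
    (fromBlocks (Z * σ⁻¹ * Zᴴ) Z Zᴴ σ).PosSemidef := by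
  have := hσ.isUnit.invertible
  rw [PosDef.fromBlocks₂₂ _ _ hσ, sub_self]
  exact PosSemidef.zero

theorem IsCompletelyPositive.map_conjTranspose (hΦ : IsCompletelyPositive Φ) (Z : Mat d) :
    Φ Zᴴ = (Φ Z)ᴴ := by
  have := hΦ.posSemidef_fromBlocks (PosDef.one.posSemidef_fromBlocks_mul_inv_mul_conjTranspose Z)
  exact (isHermitian_fromBlocks_iff.mp this.isHermitian).2.1.symm

theorem IsCompletelyPositive.posSemidef_map_sub_map_mul_inv_mul (hΦ : IsCompletelyPositive Φ)
    {σ : Mat d} (hσ : σ.PosDef) (hfix : Φ σ = σ) (Z : Mat d) :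
    (Φ (Z * σ⁻¹ * Zᴴ) - Φ Z * σ⁻¹ * (Φ Z)ᴴ).PosSemidef := by
  have := hσ.isUnit.invertible
  have hblock := hΦ.posSemidef_fromBlocks (hσ.posSemidef_fromBlocks_mul_inv_mul_conjTranspose Z)
  rw [hΦ.map_conjTranspose, hfix] at hblock
  exact (PosDef.fromBlocks₂₂ _ _ hσ).mp hblock

theorem IsCompletelyPositive.trace_map_mul_inv_mul_le (hΦ : IsCompletelyPositive Φ)
    (hTP : IsTracePreserving Φ) {σ : Mat d} (hσ : σ.PosDef) (hfix : Φ σ = σ) (Z : Mat d) :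
    (Φ Z * σ⁻¹ * (Φ Z)ᴴ).trace ≤ (Z * σ⁻¹ * Zᴴ).trace := by
  have := (hΦ.posSemidef_map_sub_map_mul_inv_mul hσ hfix Z).trace_nonneg
  rwa [trace_sub, hTP, sub_nonneg] at this

end CompletelyPositive

section Peripheral

variable {d : ℕ} {Φ Ψ : Module.End ℂ (Mat d)}

theorem IsCompletelyPositive.apply_eq_smul_iff_adjoint_mul_inv (hΦ : IsCompletelyPositive Φ)
    (hTP : IsTracePreserving Φ) (hadj : ∀ A B : Mat d, (Aᴴ * Φ B).trace = ((Ψ A)ᴴ * B).trace)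
    {σ : Mat d} (hσ : σ.PosDef) (hfix : Φ σ = σ) {μ : ℂ} (hμ : ‖μ‖ = 1) (X : Mat d) :
    Φ X = μ • X ↔ Ψ (X * σ⁻¹) = conj μ • (X * σ⁻¹) := by
  let := σ⁻¹.toMatrixNormedAddCommGroup hσ.inv
  let : InnerProductSpace ℂ (Mat d) := σ⁻¹.toMatrixInnerProductSpace hσ.inv.posSemidef
  have := hσ.isUnit.invertible
  have hinner : ∀ x y : Mat d, ⟪x, y⟫_ℂ = (y * σ⁻¹ * xᴴ).trace := fun _ _ => rfl
  have hadj' : ∀ x y, ⟪Ψ (x * σ⁻¹) * σ, y⟫_ℂ = ⟪x, Φ y⟫_ℂ := by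
    intro x y
    rw [hinner, hinner, conjTranspose_mul, hσ.isHermitian.eq, ← Matrix.mul_assoc,
      inv_mul_cancel_right_of_invertible, trace_mul_comm, ← hadj, conjTranspose_mul,
      hσ.inv.isHermitian.eq, trace_mul_cycle]
  have hcontr : ∀ Z, ‖Φ Z‖ ≤ ‖Z‖ := by
    intro Z
    rw [← sq_le_sq₀ (norm_nonneg _) (norm_nonneg _), ← inner_self_eq_norm_sq (𝕜 := ℂ),
      ← inner_self_eq_norm_sq (𝕜 := ℂ), hinner, hinner]
    exact (Complex.le_def.mp (hΦ.trace_map_mul_inv_mul_le hTP hσ hfix Z)).1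
  rw [apply_eq_smul_iff_inner_adjoint_apply_eq_smul hadj' hcontr hμ, eq_comm,
    ← mul_inv_eq_iff_eq_mul_of_invertible, Matrix.smul_mul]
  exact eq_comm

theorem map_conjTranspose_of_adjoint (hΦ : ∀ Z, Φ Zᴴ = (Φ Z)ᴴ)
    (hadj : ∀ A B : Mat d, (Aᴴ * Φ B).trace = ((Ψ A)ᴴ * B).trace) (A : Mat d) :
    Ψ Aᴴ = (Ψ A)ᴴ := by
  rw [← conjTranspose_inj, conjTranspose_conjTranspose, ext_iff_trace_mul_right]
  intro B
  calc ((Ψ Aᴴ)ᴴ * B).trace = (A * Φ B).trace := by rw [← hadj, conjTranspose_conjTranspose]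
    _ = star (Aᴴ * Φ Bᴴ).trace := by
      rw [hΦ, ← trace_conjTranspose, conjTranspose_mul, conjTranspose_conjTranspose,
        conjTranspose_conjTranspose, trace_mul_comm]
    _ = (Ψ A * B).trace := by
      rw [hadj, ← trace_conjTranspose, conjTranspose_mul, conjTranspose_conjTranspose,
        conjTranspose_conjTranspose, trace_mul_comm]

theorem IsCompletelyPositive.apply_eq_smul_iff_adjoint_inv_mul (hΦ : IsCompletelyPositive Φ)
    (hTP : IsTracePreserving Φ) (hadj : ∀ A B : Mat d, (Aᴴ * Φ B).trace = ((Ψ A)ᴴ * B).trace)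
    {σ : Mat d} (hσ : σ.PosDef) (hfix : Φ σ = σ) {μ : ℂ} (hμ : ‖μ‖ = 1) (X : Mat d) :
    Φ X = μ • X ↔ Ψ (σ⁻¹ * X) = conj μ • (σ⁻¹ * X) := by
  have hX : Xᴴ * σ⁻¹ = (σ⁻¹ * X)ᴴ := by rw [conjTranspose_mul, hσ.inv.isHermitian.eq]
  calc Φ X = μ • X ↔ Φ Xᴴ = conj μ • Xᴴ := by
        rw [hΦ.map_conjTranspose, ← Complex.star_def, ← conjTranspose_smul, conjTranspose_inj]
    _ ↔ Ψ (Xᴴ * σ⁻¹) = conj (conj μ) • (Xᴴ * σ⁻¹) :=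
        hΦ.apply_eq_smul_iff_adjoint_mul_inv hTP hadj hσ hfix (by simpa) _
    _ ↔ Ψ (σ⁻¹ * X) = conj μ • (σ⁻¹ * X) := by
        rw [hX, map_conjTranspose_of_adjoint hΦ.map_conjTranspose hadj, ← Complex.star_def,
          ← conjTranspose_smul, conjTranspose_inj]

theorem IsCompletelyPositive.conj_mem_eigenspace_adjoint (hΦ : IsCompletelyPositive Φ)
    (hTP : IsTracePreserving Φ) (hadj : ∀ A B : Mat d, (Aᴴ * Φ B).trace = ((Ψ A)ᴴ * B).trace)
    {σ : Mat d} (hσ : σ.PosDef) (hfix : Φ σ = σ) {μ : ℂ} (hμ : ‖μ‖ = 1) {Y : Mat d}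
    (hY : Y ∈ Ψ.eigenspace (conj μ)) :
    σ * Y * σ⁻¹ ∈ Ψ.eigenspace (conj μ) ∧ σ⁻¹ * Y * σ ∈ Ψ.eigenspace (conj μ) := by
  have := hσ.isUnit.invertible
  have hleft := hΦ.apply_eq_smul_iff_adjoint_inv_mul hTP hadj hσ hfix hμ
  have hright := hΦ.apply_eq_smul_iff_adjoint_mul_inv hTP hadj hσ hfix hμ
  simp only [Module.End.mem_eigenspace_iff] at hY ⊢
  constructor
  · rwa [← hright, hleft, inv_mul_cancel_left_of_invertible]
  · rwa [Matrix.mul_assoc, ← hleft, hright, mul_inv_cancel_right_of_invertible]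

end Peripheral

section SquareRoot

open Polynomial Finset

theorem Module.End.exists_aeval_mul_self_eq {V ι : Type*} [AddCommGroup V] [Module ℂ V]
    [Fintype ι] (D : Module.End ℂ V) (v : ι → V) (hv : Submodule.span ℂ (Set.range v) = ⊤)
    (ν : ι → ℝ) (hν : ∀ i, 0 ≤ ν i) (hD : ∀ i, D (v i) = (ν i : ℂ) • v i) :
    ∃ p : ℂ[X], aeval (D * D) p = D := by
  classical
  refine ⟨Lagrange.interpolate (univ.image fun i => (ν i : ℂ) ^ 2) id
    fun z => (√z.re : ℂ), LinearMap.ext_on hv ?_⟩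
  rintro _ ⟨i, rfl⟩
  have hDD : (D * D) (v i) = ((ν i : ℂ) ^ 2) • v i := by
    rw [Module.End.mul_apply, hD, map_smul, hD, smul_smul, sq]
  have hnode := Lagrange.eval_interpolate_at_node (v := id) (fun z : ℂ => (√z.re : ℂ))
    (Set.injOn_id _) (mem_image_of_mem (fun i => (ν i : ℂ) ^ 2) (mem_univ i))
  rw [id_eq] at hnode
  rw [Module.End.aeval_apply_of_mem_apply_eq_smul hDD, hD, hnode, ← Complex.ofReal_pow,
    Complex.ofReal_re, Real.sqrt_sq (hν i)]

theorem Module.End.apply_mem_of_apply_apply_mem {V ι : Type*} [AddCommGroup V] [Module ℂ V]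
    [Fintype ι] (D : Module.End ℂ V) (v : ι → V) (hv : Submodule.span ℂ (Set.range v) = ⊤)
    (ν : ι → ℝ) (hν : ∀ i, 0 ≤ ν i) (hD : ∀ i, D (v i) = (ν i : ℂ) • v i)
    {W : Submodule ℂ V} (hW : ∀ x ∈ W, D (D x) ∈ W) {x : V} (hx : x ∈ W) : D x ∈ W := by
  obtain ⟨p, hp⟩ := D.exists_aeval_mul_self_eq v hv ν hν hD
  rw [← hp]
  exact aeval_apply_smul_mem_of_le_comap hx p _ hW

variable {n : Type*} [Fintype n] [DecidableEq n]

theorem Matrix.diagonal_mul_single_mul_diagonal (α β : n → ℂ) (i j : n) :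
    diagonal α * single i j 1 * diagonal β = (α i * β j) • single i j 1 := by
  ext k l
  by_cases h : i = k ∧ j = l
  · obtain ⟨rfl, rfl⟩ := h
    simp [mul_diagonal]
  · simp [mul_diagonal, diagonal_mul, h]

theorem Matrix.PosSemidef.exists_unitary_diagonal {a : Matrix n n ℂ} (ha : a.PosSemidef) :
    ∃ U : Matrix n n ℂ, star U * U = 1 ∧ U * star U = 1 ∧
      ∃ α : n → ℝ, (∀ i, 0 ≤ α i) ∧ a = U * diagonal (fun i => (α i : ℂ)) * star U :=
  ⟨_, Unitary.coe_star_mul_self _, Unitary.coe_mul_star_self _, _, ha.eigenvalues_nonneg,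
    by simpa [Function.comp_def] using ha.1.spectral_theorem⟩

theorem Matrix.span_mul_single_mul_eq_top {U V : Matrix n n ℂ} (hU : U * star U = 1)
    (hV : V * star V = 1) :
    Submodule.span ℂ (Set.range fun ij : n × n => U * single ij.1 ij.2 1 * star V) = ⊤ := by
  refine Submodule.eq_top_iff'.mpr fun M => ?_
  have hM : M = U * (star U * M * V) * star V := by
    simp only [← Matrix.mul_assoc, hU, Matrix.one_mul]
    rw [Matrix.mul_assoc, hV, Matrix.mul_one]
  rw [hM, matrix_eq_sum_single (star U * M * V)]
  simp only [Matrix.mul_sum, Matrix.sum_mul]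
  refine Submodule.sum_mem _ fun i _ => Submodule.sum_mem _ fun j _ => ?_
  have hs : single i j ((star U * M * V) i j) = (star U * M * V) i j • single i j (1 : ℂ) := by
    rw [smul_single, smul_eq_mul, mul_one]
  rw [hs, Matrix.mul_smul, Matrix.smul_mul]
  exact Submodule.smul_mem _ _ (Submodule.subset_span ⟨(i, j), rfl⟩)

theorem Matrix.mul_mul_single_mul_mul {U V : Matrix n n ℂ} (hU : star U * U = 1)
    (hV : star V * V = 1) (α β : n → ℂ) (i j : n) :
    U * diagonal α * star U * (U * single i j 1 * star V) * (V * diagonal β * star V) =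
      (α i * β j) • (U * single i j 1 * star V) := by
  calc _ = U * (diagonal α * single i j 1 * diagonal β) * star V := by
        simp only [Matrix.mul_assoc]
        rw [← Matrix.mul_assoc (star U) U, hU, Matrix.one_mul, ← Matrix.mul_assoc (star V) V,
          hV, Matrix.one_mul]
    _ = _ := by rw [diagonal_mul_single_mul_diagonal, Matrix.mul_smul, Matrix.smul_mul]

theorem Matrix.PosSemidef.mul_mul_mem_of_sq_mul_mul_sq_mem {a b : Matrix n n ℂ}
    (ha : a.PosSemidef) (hb : b.PosSemidef) {W : Submodule ℂ (Matrix n n ℂ)}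
    (hW : ∀ x ∈ W, a * (a * x * b) * b ∈ W) {x : Matrix n n ℂ} (hx : x ∈ W) :
    a * x * b ∈ W := by
  obtain ⟨U, hU, hU', α, hα, rfl⟩ := ha.exists_unitary_diagonal
  obtain ⟨V, hV, hV', β, hβ, rfl⟩ := hb.exists_unitary_diagonal
  let D : Module.End ℂ (Matrix n n ℂ) :=
    LinearMap.mulRight ℂ (V * diagonal (fun i => (β i : ℂ)) * star V) ∘ₗ
      LinearMap.mulLeft ℂ (U * diagonal (fun i => (α i : ℂ)) * star U)
  refine D.apply_mem_of_apply_apply_mem _ (span_mul_single_mul_eq_top hU' hV')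
    (fun ij => α ij.1 * β ij.2) (fun ij => mul_nonneg (hα ij.1) (hβ ij.2)) ?_ hW hx
  rintro ⟨i, j⟩
  change U * _ * star U * _ * (V * _ * star V) = _
  rw [mul_mul_single_mul_mul hU hV, Complex.ofReal_mul]

end SquareRoot

/-- Let `Φ` be a faithful quantum channel with full-rank fixed state
`σ` (with inverse square root `t = σ^{-1/2}`), `Ψ = Φ†` its Hilbert–Schmidt adjoint, and
`|μ| = 1`. Then `X` is an eigenvector of `Φ` with eigenvalue `μ` iff
`σ^{-1/2} X σ^{-1/2}` is an eigenvector of `Φ†` with eigenvalue `conj μ`. -/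
theorem peripheral_eigenvector_correspondence
    (d : ℕ) (Φ Ψ : Module.End ℂ (Mat d))
    (hCP : IsCompletelyPositive Φ) (hTP : IsTracePreserving Φ)
    (hadj : ∀ A B : Mat d, (Aᴴ * Φ B).trace = ((Ψ A)ᴴ * B).trace)
    (σ t : Mat d) (hσ : σ.PosDef) (hfix : Φ σ = σ)
    (ht : t.PosDef) (hinv : (t * t) * σ = 1)
    (μ : ℂ) (habs : ‖μ‖ = 1) (X : Mat d) :
    (X ≠ 0 ∧ Φ X = μ • X) ↔
      (t * X * t ≠ 0 ∧ Ψ (t * X * t) = (starRingEnd ℂ μ) • (t * X * t)) := by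
  have := ht.isUnit.invertible
  have hσ_inv : σ⁻¹ = t * t := inv_eq_left_inv hinv
  have hσ_eq : σ = t⁻¹ * t⁻¹ := by rw [← Matrix.mul_inv_rev, inv_eq_right_inv hinv]
  set W := Ψ.eigenspace (conj μ)
  have hσW : ∀ Y ∈ W, t⁻¹ * (t⁻¹ * Y * t) * t ∈ W ∧ t * (t * Y * t⁻¹) * t⁻¹ ∈ W := by
    intro Y hY
    have := hCP.conj_mem_eigenspace_adjoint hTP hadj hσ hfix habs hY
    rw [hσ_inv, hσ_eq] at this
    simpa only [Matrix.mul_assoc] using this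
  have htW : ∀ Y ∈ W, t⁻¹ * Y * t ∈ W := fun Y =>
    ht.inv.posSemidef.mul_mul_mem_of_sq_mul_mul_sq_mem ht.posSemidef fun x hx => (hσW x hx).1
  have htW' : ∀ Y ∈ W, t * Y * t⁻¹ ∈ W := fun Y =>
    ht.posSemidef.mul_mul_mem_of_sq_mul_mul_sq_mem ht.inv.posSemidef fun x hx => (hσW x hx).2
  have heig : Φ X = μ • X ↔ t * X * t ∈ W := by
    rw [hCP.apply_eq_smul_iff_adjoint_inv_mul hTP hadj hσ hfix habs,
      ← Module.End.mem_eigenspace_iff, hσ_inv]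
    refine ⟨fun h => ?_, fun h => ?_⟩
    · simpa only [Matrix.mul_assoc, inv_mul_cancel_left_of_invertible] using htW _ h
    · simpa only [Matrix.mul_assoc, mul_inv_of_invertible, Matrix.mul_one] using htW' _ h
  rw [heig, Module.End.mem_eigenspace_iff, ne_eq, ne_eq, ht.isUnit.mul_left_eq_zero,
    ht.isUnit.mul_right_eq_zero]
end
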